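/- Let g2 = 4/3 and g3 = −8/27, and let H(u,v,w) := (uv+vw+wu+g2/4)² − (u+v+w)(4uvw−g3). Define p(t) := 1/sinh²t + 1/3 for complex t with sinh t ≠ 0. Then for all x, y, z ∈ ℂ with sinh x, sinh y, sinh z nonzero: H(p(x), p(y), p(z)) = − sinh(x+y+z)·sinh(−x+y+z)·sinh(x−y+z)·sinh(x+y−z) / (sinh⁴x · sinh⁴y · sinh⁴z), where sinh is the complex hyperbolic sine. -/

import Mathlib

open Complex

set_option maxHeartbeats 1000000

/-- The symmetric polynomial `H(u,v,w)` with `g₂ = 4/3`, `g₃ = −8/27`. -/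
noncomputable def Hdeg (u v w : ℂ) : ℂ :=
  (u * v + v * w + w * u + (4 / 3 : ℂ) / 4) ^ 2
    - (u + v + w) * (4 * u * v * w - (-8 / 27 : ℂ))

/-- The degenerate Weierstrass function `p(t) = 1/sinh²t + 1/3`. -/
noncomputable def pdeg (t : ℂ) : ℂ := 1 / sinh t ^ 2 + 1 / 3

lemma Hfrac (p q r Ds Dt Du : ℂ) (hs : Ds ≠ 0) (ht : Dt ≠ 0) (hu : Du ≠ 0) :
    Hdeg p q r =
      ((p*Ds*(q*Dt)*Du + q*Dt*(r*Du)*Ds + r*Du*(p*Ds)*Dt + (1/3)*(Ds*Dt*Du))^2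
        - (p*Ds*(Dt*Du) + q*Dt*(Ds*Du) + r*Du*(Ds*Dt))
          * (4*(p*Ds)*(q*Dt)*(r*Du) + (8/27)*(Ds*Dt*Du))) / (Ds*Dt*Du)^2 := by
  unfold Hdeg
  rw [eq_div_iff (pow_ne_zero _ (mul_ne_zero (mul_ne_zero hs ht) hu))]
  ring

lemma aux (s t u : ℂ) (hA : s - 1 ≠ 0) (hB : t - 1 ≠ 0) (hC : u - 1 ≠ 0) :
    Hdeg (4*s/(s-1)^2 + 1/3) (4*t/(t-1)^2 + 1/3) (4*u/(u-1)^2 + 1/3)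
      = -256 * ((s*t*u-1)*(t*u-s)*(s*u-t)*(s*t-u))
          / ((s-1)^4*(t-1)^4*(u-1)^4) := by
  have hDs : (3*(s-1)^2 : ℂ) ≠ 0 := mul_ne_zero three_ne_zero (pow_ne_zero _ hA)
  have hDt : (3*(t-1)^2 : ℂ) ≠ 0 := mul_ne_zero three_ne_zero (pow_ne_zero _ hB)
  have hDu : (3*(u-1)^2 : ℂ) ≠ 0 := mul_ne_zero three_ne_zero (pow_ne_zero _ hC)
  have e1 : 4*s/(s-1)^2 + 1/3 = (s^2+10*s+1)/(3*(s-1)^2) := by field_simp; ring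
  have e2 : 4*t/(t-1)^2 + 1/3 = (t^2+10*t+1)/(3*(t-1)^2) := by field_simp; ring
  have e3 : 4*u/(u-1)^2 + 1/3 = (u^2+10*u+1)/(3*(u-1)^2) := by field_simp; ring
  rw [e1, e2, e3, Hfrac _ _ _ _ _ _ hDs hDt hDu,
    div_mul_cancel₀ _ hDs, div_mul_cancel₀ _ hDt, div_mul_cancel₀ _ hDu,
    div_eq_div_iff (pow_ne_zero _ (mul_ne_zero (mul_ne_zero hDs hDt) hDu))
      (mul_ne_zero (mul_ne_zero (pow_ne_zero _ hA) (pow_ne_zero _ hB)) (pow_ne_zero _ hC))]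
  ring

lemma fin (N D P Q : ℂ) (hD : D ≠ 0) (hP : P ≠ 0) (h : Q = 256 * P) :
    -256 * N / D = -(N / D / (P / Q)) := by
  subst h
  field_simp

/-- The hyperbolic degeneration of the identity
`H(℘(x),℘(y),℘(z)) = −σ(x+y+z)σ(−x+y+z)σ(x−y+z)σ(x+y−z)/(σ⁴(x)σ⁴(y)σ⁴(z))`
for `g₂ = 4/3`, `g₃ = −8/27`. -/
theorem Hdeg_sinh_identity (x y z : ℂ)
    (hx : sinh x ≠ 0) (hy : sinh y ≠ 0) (hz : sinh z ≠ 0) :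
    Hdeg (pdeg x) (pdeg y) (pdeg z) =
      -(sinh (x + y + z) * sinh (-x + y + z) * sinh (x - y + z) * sinh (x + y - z)) /
        (sinh x ^ 4 * sinh y ^ 4 * sinh z ^ 4) := by
  set a := exp x with hax
  set b := exp y with hby
  set c := exp z with hcz
  have ha : a ≠ 0 := exp_ne_zero x
  have hb : b ≠ 0 := exp_ne_zero y
  have hc : c ≠ 0 := exp_ne_zero z
  have hsx : sinh x = (a^2-1)/(2*a) := by
    rw [Complex.sinh, exp_neg, ← hax]; field_simp
  have hsy : sinh y = (b^2-1)/(2*b) := by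
    rw [Complex.sinh, exp_neg, ← hby]; field_simp
  have hsz : sinh z = (c^2-1)/(2*c) := by
    rw [Complex.sinh, exp_neg, ← hcz]; field_simp
  have hA : a^2 - 1 ≠ 0 := fun h => hx (by rw [hsx, h, zero_div])
  have hB : b^2 - 1 ≠ 0 := fun h => hy (by rw [hsy, h, zero_div])
  have hC : c^2 - 1 ≠ 0 := fun h => hz (by rw [hsz, h, zero_div])
  have habc : (2:ℂ)*(a*b*c) ≠ 0 := by
    exact mul_ne_zero two_ne_zero (mul_ne_zero (mul_ne_zero ha hb) hc)
  have h1 : sinh (x+y+z) = (a^2*b^2*c^2-1)/(2*(a*b*c)) := by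
    rw [Complex.sinh, exp_neg, exp_add, exp_add, ← hax, ← hby, ← hcz]; field_simp
  have h2 : sinh (-x+y+z) = (b^2*c^2-a^2)/(2*(a*b*c)) := by
    simp only [Complex.sinh, exp_add, exp_sub, exp_neg, neg_add, neg_sub, ← hax, ← hby, ← hcz]
    field_simp
  have h3 : sinh (x-y+z) = (a^2*c^2-b^2)/(2*(a*b*c)) := by
    simp only [Complex.sinh, exp_add, exp_sub, exp_neg, neg_add, neg_sub, ← hax, ← hby, ← hcz]
    field_simp
  have h4 : sinh (x+y-z) = (a^2*b^2-c^2)/(2*(a*b*c)) := by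
    simp only [Complex.sinh, exp_add, exp_sub, exp_neg, neg_add, neg_sub, ← hax, ← hby, ← hcz]
    field_simp
  have hpx : pdeg x = 4*(a^2)/(a^2-1)^2 + 1/3 := by
    rw [pdeg, hsx, div_pow, one_div_div, show ((2:ℂ)*a)^2 = 4*a^2 by ring]
  have hpy : pdeg y = 4*(b^2)/(b^2-1)^2 + 1/3 := by
    rw [pdeg, hsy, div_pow, one_div_div, show ((2:ℂ)*b)^2 = 4*b^2 by ring]
  have hpz : pdeg z = 4*(c^2)/(c^2-1)^2 + 1/3 := by
    rw [pdeg, hsz, div_pow, one_div_div, show ((2:ℂ)*c)^2 = 4*c^2 by ring]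
  rw [hpx, hpy, hpz, aux _ _ _ hA hB hC, h1, h2, h3, h4, hsx, hsy, hsz]
  rw [div_pow, div_pow, div_pow]
  rw [div_mul_div_comm, div_mul_div_comm, div_mul_div_comm, div_mul_div_comm, div_mul_div_comm,
    neg_div, div_div_div_comm]
  have hP : (2*(a*b*c)*(2*(a*b*c))*(2*(a*b*c))*(2*(a*b*c)) : ℂ) ≠ 0 :=
    mul_ne_zero (mul_ne_zero (mul_ne_zero habc habc) habc) habc
  have hD : ((a^2-1)^4*(b^2-1)^4*(c^2-1)^4 : ℂ) ≠ 0 :=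
    mul_ne_zero (mul_ne_zero (pow_ne_zero _ hA) (pow_ne_zero _ hB)) (pow_ne_zero _ hC)
  exact fin ((a^2*b^2*c^2-1)*(b^2*c^2-a^2)*(a^2*c^2-b^2)*(a^2*b^2-c^2))
    ((a^2-1)^4*(b^2-1)^4*(c^2-1)^4)
    (2*(a*b*c)*(2*(a*b*c))*(2*(a*b*c))*(2*(a*b*c)))
    ((2*a)^4*(2*b)^4*(2*c)^4) hD hP (by ring)
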